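/- For every integer j with 0 ≤ j ≤ n and all real numbers α₁, α₂, τ, one has Σ_{i=j}^{n} (−1)^{i−j}·binom(n−j, n−i)·(α₁;τ)_j·(α₂+jτ;τ)_{i−j}·(α₁+α₂+(i+j)τ;τ)_{n−i} = (α₁;τ)_n. -/

import Mathlib

open Finset

/-- The shifted Pochhammer symbol `(x;τ)_i = x(x+τ)⋯(x+(i−1)τ)`. -/
noncomputable def poch (x τ : ℝ) (i : ℕ) : ℝ := ∏ k ∈ Finset.range i, (x + (k : ℝ) * τ)

/-!
Writing `i = j + k` and `m = n - j`, the factor `(α₁;τ)_j` comes out of the sum and what is left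
is the Chu–Vandermonde type identity
`∑ₖ (-1)^k C(m,k) (b;τ)_k (a+b+kτ;τ)_{m-k} = (a;τ)_m` with `a = α₁ + jτ`, `b = α₂ + jτ`;
then `(α₁;τ)_j (α₁+jτ;τ)_{n-j} = (α₁;τ)_n`. The identity follows by induction on `m`: Pascal's
rule splits the sum for `m + 1` into two sums whose terms recombine, since
`(a+b+kτ) - (b+kτ) = a`, into `a` times the sum for `m` at `a + τ`.
-/

lemma poch_succ (x τ : ℝ) (m : ℕ) : poch x τ (m + 1) = poch x τ m * (x + m * τ) :=
  prod_range_succ _ _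

lemma poch_add (x τ : ℝ) (a b : ℕ) :
    poch x τ (a + b) = poch x τ a * poch (x + a * τ) τ b := by
  rw [poch, prod_range_add]
  congr 1
  refine prod_congr rfl fun k _ => ?_
  push_cast
  ring

lemma poch_succ' (x τ : ℝ) (m : ℕ) : poch x τ (m + 1) = x * poch (x + τ) τ m := by
  rw [add_comm, poch_add]
  simp [poch]

theorem sum_choose_mul_poch_mul_poch (m : ℕ) (a b τ : ℝ) :
    ∑ k ∈ range (m + 1),
        (m.choose k : ℝ) * ((-1) ^ k * poch b τ k * poch (a + b + k * τ) τ (m - k)) =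
      poch a τ m := by
  induction m generalizing a with
  | zero => simp [poch]
  | succ m ih =>
    rw [sum_choose_succ_mul (fun k l => (-1) ^ k * poch b τ k * poch (a + b + k * τ) τ l),
      ← sum_add_distrib, poch_succ', ← ih (a + τ), mul_sum]
    refine sum_congr rfl fun k hk => ?_
    have hsub : m + 1 - k = m - k + 1 := by grind
    have hshift : a + b + ((k + 1 : ℕ) : ℝ) * τ = a + τ + b + k * τ := by push_cast; ring
    rw [hsub, poch_succ', poch_succ, hshift, show a + b + k * τ + τ = a + τ + b + k * τ by ring]
    ring

theorem stmt_10_general (n : ℕ) (j : ℕ) (hj : j ≤ n) (α₁ α₂ τ : ℝ) :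
    ∑ i ∈ Finset.Icc j n,
        (-1 : ℝ) ^ (i - j) * (Nat.choose (n - j) (n - i) : ℝ) *
          poch α₁ τ j * poch (α₂ + (j : ℝ) * τ) τ (i - j) *
          poch (α₁ + α₂ + ((i : ℝ) + j) * τ) τ (n - i) =
      poch α₁ τ n := by
  obtain ⟨m, rfl⟩ := Nat.exists_eq_add_of_le hj
  rw [← Ico_add_one_right_eq_Icc, sum_Ico_eq_sum_range, add_assoc j m 1, Nat.add_sub_cancel_left,
    poch_add, ← sum_choose_mul_poch_mul_poch m (α₁ + j * τ) (α₂ + j * τ) τ, mul_sum]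
  simp only [Nat.add_sub_cancel_left, Nat.add_sub_add_left]
  refine sum_congr rfl fun k hk => ?_
  have hshift : α₁ + α₂ + (((j + k : ℕ) : ℝ) + j) * τ = α₁ + j * τ + (α₂ + j * τ) + k * τ := by
    push_cast; ring
  rw [Nat.choose_symm (by grind), hshift]
  ring

theorem stmt_10 (n : ℕ) (hn : 1 ≤ n) (j : ℕ) (hj : j ≤ n) (α₁ α₂ τ : ℝ) :
    ∑ i ∈ Finset.Icc j n,
        (-1 : ℝ) ^ (i - j) * (Nat.choose (n - j) (n - i) : ℝ) *
          poch α₁ τ j * poch (α₂ + (j : ℝ) * τ) τ (i - j) *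
          poch (α₁ + α₂ + ((i : ℝ) + j) * τ) τ (n - i) =
      poch α₁ τ n :=
  stmt_10_general n j hj α₁ α₂ τ
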